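/- (Discrete maximum principle / injectivity of the linearized Lax-Friedrichs operator.) Let b : ℤ^d → ℝ^d and c : ℤ^d → ℝ be grid functions with c(α) ≥ 0 for every interior index α, let θ > 0, and assume β ≥ (1/2)·max over interior indices α and coordinates i of |b_i(α)|. If a grid function W : ℤ^d → ℝ satisfies −β Σ_{i=1}^d h_i δ_i² W_α + b(α)·∇_h W_α + (c(α) + θ) W_α = 0 at every interior index α and W_α = 0 at every boundary index α, then W_α = 0 at every grid index α. -/
import Mathlib


open Finset

/-- `α` is an interior index: `0 < α i < J i` for all `i`. -/
def isInterior {d : ℕ} (J : Fin d → ℤ) (α : Fin d → ℤ) : Prop :=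
  ∀ i, 0 < α i ∧ α i < J i

/-- `α` is a grid index: `0 ≤ α i ≤ J i` for all `i`. -/
def isGrid {d : ℕ} (J : Fin d → ℤ) (α : Fin d → ℤ) : Prop :=
  ∀ i, 0 ≤ α i ∧ α i ≤ J i

/-- `α` is a boundary index: a grid index with `α i ∈ {0, J i}` for some `i`. -/
def isBoundary {d : ℕ} (J : Fin d → ℤ) (α : Fin d → ℤ) : Prop :=
  isGrid J α ∧ ∃ i, α i = 0 ∨ α i = J i

instance {d : ℕ} (J α : Fin d → ℤ) : Decidable (isInterior J α) :=
  inferInstanceAs (Decidable (∀ i, 0 < α i ∧ α i < J i))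

instance {d : ℕ} (J α : Fin d → ℤ) : Decidable (isGrid J α) :=
  inferInstanceAs (Decidable (∀ i, 0 ≤ α i ∧ α i ≤ J i))

/-- The grid node `x_α = a + (α₁h₁, …, α_dh_d)`. -/
noncomputable def xpt {d : ℕ} (a h : Fin d → ℝ) (α : Fin d → ℤ) : Fin d → ℝ :=
  fun i => a i + (α i : ℝ) * h i

/-- Second central difference `δᵢ² U_α = (U_{α+eᵢ} − 2U_α + U_{α−eᵢ})/hᵢ²`. -/
noncomputable def delta2 {d : ℕ} (h : Fin d → ℝ) (U : (Fin d → ℤ) → ℝ) (i : Fin d)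
    (α : Fin d → ℤ) : ℝ :=
  (U (α + Pi.single i 1) - 2 * U α + U (α - Pi.single i 1)) / (h i) ^ 2

/-- Central discrete gradient `∇_h U_α`. -/
noncomputable def gradh {d : ℕ} (h : Fin d → ℝ) (U : (Fin d → ℤ) → ℝ) (α : Fin d → ℤ) :
    Fin d → ℝ :=
  fun i => (U (α + Pi.single i 1) - U (α - Pi.single i 1)) / (2 * h i)

/-- Lax-Friedrichs operator
`Ĥ_LF[U]_α = −β Σᵢ hᵢ δᵢ² U_α + H(∇_h U_α, U_α, x_α) + θ U_α`. -/
noncomputable def HLF {d : ℕ} (h : Fin d → ℝ) (H : (Fin d → ℝ) → ℝ → (Fin d → ℝ) → ℝ)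
    (θ β : ℝ) (a : Fin d → ℝ) (U : (Fin d → ℤ) → ℝ) (α : Fin d → ℤ) : ℝ :=
  -β * (∑ i, h i * delta2 h U i α) + H (gradh h U α) (U α) (xpt a h α) + θ * U α

lemma dmp_aux {d : ℕ}
    (J : Fin d → ℤ) (hJ : ∀ i, 2 ≤ J i)
    (h : Fin d → ℝ) (hh : ∀ i, 0 < h i)
    (b : (Fin d → ℤ) → (Fin d → ℝ)) (c : (Fin d → ℤ) → ℝ)
    (hc : ∀ α, isInterior J α → 0 ≤ c α)
    (θ : ℝ) (hθ : 0 < θ) (β : ℝ)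
    (hβ : ∀ α, isInterior J α → ∀ i, |b α i| ≤ 2 * β)
    (W : (Fin d → ℤ) → ℝ)
    (hint : ∀ α, isInterior J α →
      -β * (∑ i, h i * delta2 h W i α) + (∑ i, b α i * gradh h W α i)
        + (c α + θ) * W α = 0)
    (hbd : ∀ α, isBoundary J α → W α = 0) :
    ∀ α, isGrid J α → W α ≤ 0 := by
  classical
  set S : Finset (Fin d → ℤ) := Fintype.piFinset fun i => Finset.Icc (0:ℤ) (J i) with hS
  have memS : ∀ α, α ∈ S ↔ isGrid J α := by
    intro α
    simp [hS, Fintype.mem_piFinset, isGrid, Finset.mem_Icc]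
  have hSne : S.Nonempty := ⟨fun _ => 0, (memS _).2 (fun i => ⟨le_refl _, by linarith [hJ i]⟩)⟩
  obtain ⟨α₀, hα₀S, hmax⟩ := S.exists_max_image W hSne
  intro α hα
  have hle : W α ≤ W α₀ := hmax α ((memS α).2 hα)
  suffices hsuf : W α₀ ≤ 0 by linarith
  by_contra hpos
  push_neg at hpos
  have hα₀G : isGrid J α₀ := (memS α₀).1 hα₀S
  by_cases hI : isInterior J α₀
  · -- interior: use the equation
    have hgp : ∀ i, isGrid J (α₀ + Pi.single i 1) := by
      intro i j
      by_cases hij : j = i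
      · subst hij
        simp only [Pi.add_apply, Pi.single_eq_same]
        obtain ⟨h1, h2⟩ := hI j
        omega
      · simp only [Pi.add_apply, Pi.single_eq_of_ne hij]
        obtain ⟨h1, h2⟩ := hI j
        omega
    have hgm : ∀ i, isGrid J (α₀ - Pi.single i 1) := by
      intro i j
      by_cases hij : j = i
      · subst hij
        simp only [Pi.sub_apply, Pi.single_eq_same]
        obtain ⟨h1, h2⟩ := hI j
        omega
      · simp only [Pi.sub_apply, Pi.single_eq_of_ne hij]
        obtain ⟨h1, h2⟩ := hI j
        omega
    have key : ∀ i, β * (h i * delta2 h W i α₀) - b α₀ i * gradh h W α₀ i ≤ 0 := by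
      intro i
      have hP : W (α₀ + Pi.single i 1) ≤ W α₀ := hmax _ ((memS _).2 (hgp i))
      have hQ : W (α₀ - Pi.single i 1) ≤ W α₀ := hmax _ ((memS _).2 (hgm i))
      have hb := hβ α₀ hI i
      rw [abs_le] at hb
      have hi := hh i
      set P := W (α₀ + Pi.single i 1)
      set Q := W (α₀ - Pi.single i 1)
      set R := W α₀
      have heq : β * (h i * delta2 h W i α₀) - b α₀ i * gradh h W α₀ i
          = (2 * β * (P - 2 * R + Q) - b α₀ i * (P - Q)) / (2 * h i) := by
        simp only [delta2, gradh]
        field_simp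
        ring
      rw [heq]
      apply div_nonpos_of_nonpos_of_nonneg
      · nlinarith [mul_nonneg (by linarith : (0:ℝ) ≤ 2*β - b α₀ i) (by linarith : (0:ℝ) ≤ R - P),
          mul_nonneg (by linarith : (0:ℝ) ≤ 2*β + b α₀ i) (by linarith : (0:ℝ) ≤ R - Q)]
      · linarith
    have hsum : ∑ i, (β * (h i * delta2 h W i α₀) - b α₀ i * gradh h W α₀ i) ≤ 0 :=
      Finset.sum_nonpos (fun i _ => key i)
    have hsplit : ∑ i, (β * (h i * delta2 h W i α₀) - b α₀ i * gradh h W α₀ i)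
        = β * (∑ i, h i * delta2 h W i α₀) - ∑ i, b α₀ i * gradh h W α₀ i := by
      rw [Finset.sum_sub_distrib, Finset.mul_sum]
    have heq := hint α₀ hI
    have hc0 := hc α₀ hI
    nlinarith [hsum, hsplit, heq]
  · -- boundary
    have hB : isBoundary J α₀ := by
      refine ⟨hα₀G, ?_⟩
      by_contra hnone
      push_neg at hnone
      apply hI
      intro i
      obtain ⟨h1, h2⟩ := hα₀G i
      have := hnone i
      omega
    have := hbd α₀ hB
    linarith
lemma dmp_neg_delta2 {d : ℕ} (h : Fin d → ℝ) (W : (Fin d → ℤ) → ℝ) (i : Fin d)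
    (α : Fin d → ℤ) : delta2 h (fun x => -W x) i α = -delta2 h W i α := by
  simp only [delta2]
  ring

lemma dmp_neg_gradh {d : ℕ} (h : Fin d → ℝ) (W : (Fin d → ℤ) → ℝ) (α : Fin d → ℤ)
    (i : Fin d) : gradh h (fun x => -W x) α i = -gradh h W α i := by
  simp only [gradh]
  ring

/-- Discrete maximum principle / injectivity of the linearized Lax-Friedrichs
operator: if `c ≥ 0` on interior indices, `θ > 0`, and
`β ≥ (1/2) max_{interior α, i} |bᵢ(α)|` (i.e. `|bᵢ(α)| ≤ 2β`), then a grid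
function `W` with `−β Σᵢ hᵢ δᵢ² W + b·∇_h W + (c + θ) W = 0` at interior indices
and `W = 0` at boundary indices vanishes at every grid index. -/
theorem discrete_maximum_principle {d : ℕ} (hd : 0 < d)
    (J : Fin d → ℤ) (hJ : ∀ i, 2 ≤ J i)
    (h : Fin d → ℝ) (hh : ∀ i, 0 < h i) (a : Fin d → ℝ)
    (b : (Fin d → ℤ) → (Fin d → ℝ)) (c : (Fin d → ℤ) → ℝ)
    (hc : ∀ α, isInterior J α → 0 ≤ c α)
    (θ : ℝ) (hθ : 0 < θ) (β : ℝ) (hβ0 : 0 ≤ β)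
    (hβ : ∀ α, isInterior J α → ∀ i, |b α i| ≤ 2 * β)
    (W : (Fin d → ℤ) → ℝ)
    (hint : ∀ α, isInterior J α →
      -β * (∑ i, h i * delta2 h W i α) + (∑ i, b α i * gradh h W α i)
        + (c α + θ) * W α = 0)
    (hbd : ∀ α, isBoundary J α → W α = 0) :
    ∀ α, isGrid J α → W α = 0 := by
  have hub := dmp_aux J hJ h hh b c hc θ hθ β hβ W hint hbd
  have hint' : ∀ α, isInterior J α →
      -β * (∑ i, h i * delta2 h (fun x => -W x) i α)
        + (∑ i, b α i * gradh h (fun x => -W x) α i)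
        + (c α + θ) * (fun x => -W x) α = 0 := by
    intro α hα
    have e1 : ∑ i, h i * delta2 h (fun x => -W x) i α
        = -(∑ i, h i * delta2 h W i α) := by
      rw [← Finset.sum_neg_distrib]
      exact Finset.sum_congr rfl fun i _ => by rw [dmp_neg_delta2]; ring
    have e2 : ∑ i, b α i * gradh h (fun x => -W x) α i
        = -(∑ i, b α i * gradh h W α i) := by
      rw [← Finset.sum_neg_distrib]
      exact Finset.sum_congr rfl fun i _ => by rw [dmp_neg_gradh]; ring
    have := hint α hα
    rw [e1, e2]
    simp only
    linarith
  have hbd' : ∀ α, isBoundary J α → (fun x => -W x) α = 0 := by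
    intro α hα
    simp [hbd α hα]
  have hlb := dmp_aux J hJ h hh b c hc θ hθ β hβ (fun x => -W x) hint' hbd'
  intro α hα
  have h1 := hub α hα
  have h2 := hlb α hα
  linarith
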